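/- arXiv:2006.12916 — 4 statements merged into one kernel-verified Lean document; each statement's English description precedes it below -/
import Mathlib

section
/- If a rooted graph (X,E) is (m,k)-departing, then for every positive integer ℓ it is (m,ℓk)-departing; that is, for all x,y ∈ X with |x|=|y|, if d_h(x,y) > ℓk then d_h(u,v) > 2ℓk for all u ∈ J_m(x) and v ∈ J_m(y). -/
open SimpleGraph Metric
open scoped ENNReal ENat

noncomputable section

/-- A locally finite connected graph with a distinguished root. -/
structure RootedGraph (X : Type*) where
  G : SimpleGraph X
  root : X
  conn : G.Connected
  locFin : ∀ x : X, {y | G.Adj x y}.Finite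

namespace RootedGraph

variable {X : Type*} (R : RootedGraph X)

/-- The level `|x| = d(ϑ,x)` of a vertex. -/
def level (x : X) : ℕ := R.G.dist R.root x

/-- The horizontal subgraph: edges joining vertices of equal level. -/
def Gh : SimpleGraph X where
  Adj x y := R.G.Adj x y ∧ R.level x = R.level y
  symm := ⟨fun _ _ h => ⟨h.1.symm, h.2.symm⟩⟩
  loopless := ⟨fun x h => R.G.loopless.irrefl x h.1⟩

/-- The horizontal distance `d_h`, valued in `ℕ∞`. -/
def dh (x y : X) : ℕ∞ := R.Gh.edist x y

/-- The `m`-th descendant set `J_m(x)`: vertices `y` with `|y| = |x| + m` lying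
below `x` (i.e. `x` lies on a geodesic from the root to `y`). -/
def J (m : ℕ) (x : X) : Set X :=
  {y | R.level y = R.level x + m ∧ R.G.dist x y = m}

/-- `(m,k)`-departing property. -/
def Departing (m k : ℕ) : Prop :=
  ∀ x y : X, R.level x = R.level y → (k : ℕ∞) < R.dh x y →
    ∀ u ∈ R.J m x, ∀ v ∈ R.J m y, ((2 * k : ℕ) : ℕ∞) < R.dh u v

/-- Expansive property. -/
def Expansive : Prop :=
  ∀ x y : X, R.level x = R.level y → (1 : ℕ∞) < R.dh x y →
    ∀ u ∈ R.J 1 x, ∀ v ∈ R.J 1 y, (1 : ℕ∞) < R.dh u v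

/-- The Gromov product `(x|y)` with base point the root. -/
def gp (x y : X) : ℝ := ((R.level x : ℝ) + R.level y - R.G.dist x y) / 2

/-- Gromov hyperbolicity with respect to the root base point. -/
def Hyperbolic : Prop :=
  ∃ δ : ℝ, 0 ≤ δ ∧ ∀ x y z : X, min (R.gp x z) (R.gp z y) - δ ≤ R.gp x y

/-- A geodesic ray from the root. -/
def IsRay (f : ℕ → X) : Prop := f 0 = R.root ∧ ∀ i, f (i + 1) ∈ R.J 1 (f i)

/-- The Gromov product of two rays: the (increasing) limit of `(x_i|y_i)`. -/
def gpRay (f g : ℕ → X) : ℝ≥0∞ := ⨆ i, ENNReal.ofReal (R.gp (f i) (g i))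

/-- `|x ∨ y|_k = sup{ i : d_h(x_i,y_i) ≤ k }`. -/
def joinK (k : ℕ) (f g : ℕ → X) : ℝ≥0∞ :=
  ⨆ (i : ℕ) (_ : R.dh (f i) (g i) ≤ (k : ℕ∞)), (i : ℝ≥0∞)

/-- The Gromov product on a model `B` of the hyperbolic boundary, defined as the
supremum over pairs of converging rays. -/
def gpB {B : Type*} (lim : (ℕ → X) → B) (ξ η : B) : ℝ≥0∞ :=
  ⨆ (f : ℕ → X) (g : ℕ → X)
    (_ : R.IsRay f ∧ R.IsRay g ∧ lim f = ξ ∧ lim g = η), R.gpRay f g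

/-- `B` together with `lim` is a model of the hyperbolic boundary: every point is the
limit of a ray, and two rays have the same limit iff they are equivalent. -/
def BoundaryOf {B : Type*} (lim : (ℕ → X) → B) : Prop :=
  (∀ ξ : B, ∃ f, R.IsRay f ∧ lim f = ξ) ∧
    ∀ f g, R.IsRay f → R.IsRay g → (lim f = lim g ↔ R.gpRay f g = ⊤)

/-- The metric on the boundary model is a Gromov metric:
`θ_a(ξ,η) ≍ e^{-a(ξ|η)}`. -/
def GromovLike {B : Type*} [MetricSpace B] (lim : (ℕ → X) → B) (a c₁ c₂ : ℝ) : Prop :=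
  ∀ ξ η : B, ξ ≠ η →
    c₁ * Real.exp (-a * (R.gpB lim ξ η).toReal) ≤ dist ξ η ∧
      dist ξ η ≤ c₂ * Real.exp (-a * (R.gpB lim ξ η).toReal)

/-- The boundary cell `J_∂(x)`: boundary points reachable by rays through `x`. -/
def cell {B : Type*} (lim : (ℕ → X) → B) (x : X) : Set B :=
  {ξ | ∃ f, R.IsRay f ∧ f (R.level x) = x ∧ lim f = ξ}

/-- The `k`-shadow `J^k_∂(x)`. -/
def shadow {B : Type*} (lim : (ℕ → X) → B) (k : ℕ) (x : X) : Set B :=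
  ⋃ y ∈ {y | R.level y = R.level x ∧ R.dh x y ≤ (k : ℕ∞)}, R.cell lim y

/-- Bounded degree. -/
def BddDeg : Prop := ∃ D : ℕ, ∀ x : X, Set.ncard {y | R.G.Adj x y} ≤ D

/-- A vertical rooted graph: all edges join adjacent levels. -/
def Vertical : Prop :=
  ∀ x y : X, R.G.Adj x y → R.level x = R.level y + 1 ∨ R.level y = R.level x + 1

/-- An index map on `(X,E_v)` over `M`. -/
def IsIndexMap {M : Type*} [MetricSpace M] (Φ : X → Set M) : Prop :=
  (∀ x, IsCompact (Φ x)) ∧ (∀ x, (Φ x).Nonempty) ∧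
    (∀ x y, y ∈ R.J 1 x → Φ y ⊆ Φ x) ∧
    (∀ f, R.IsRay f → ∃ p, (⋂ i, Φ (f i)) = {p})

/-- The attractor of an index map. -/
def attractor {M : Type*} [MetricSpace M] (Φ : X → Set M) : Set M :=
  ⋂ n : ℕ, ⋃ x ∈ {x | R.level x = n}, Φ x

/-- Exponential type-(b): `diam Φ(x) ≤ δ₀ e^{-b|x|}`. -/
def ExpType {M : Type*} [MetricSpace M] (Φ : X → Set M) (b δ₀ : ℝ) : Prop :=
  ∀ x, EMetric.diam (Φ x) ≤ ENNReal.ofReal (δ₀ * Real.exp (-b * R.level x))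

/-- Condition `(S_b)`. -/
def CondS {M : Type*} [MetricSpace M] (Φ : X → Set M) (b : ℝ) : Prop :=
  ∀ c : ℝ, 0 < c → ∃ ℓ : ℕ, ∀ (n : ℕ) (F : Set M),
    EMetric.diam F < ENNReal.ofReal (c * Real.exp (-b * n)) →
      Set.ncard {x | R.level x = n ∧ ((Φ x ∩ R.attractor Φ) ∩ F).Nonempty} ≤ ℓ

end RootedGraph

/-- Distance between two subsets of a metric space. -/
def setDist {M : Type*} [MetricSpace M] (s t : Set M) : ℝ :=
  sInf ((fun p : M × M => dist p.1 p.2) '' s ×ˢ t)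

/-- The AI_b-graph on `X` associated to an index map `Φ`:
same root, same vertical edges, and horizontal edges between distinct equal-level
vertices whose index sets are `γe^{-bn}`-close. -/
def RootedGraph.IsAIb {X M : Type*} [MetricSpace M] (R R' : RootedGraph X)
    (Φ : X → Set M) (b γ : ℝ) : Prop :=
  R'.root = R.root ∧ ∀ x y : X, R'.G.Adj x y ↔
    (R.G.Adj x y ∨ (R.level x = R.level y ∧ x ≠ y ∧
      setDist (Φ x) (Φ y) ≤ γ * Real.exp (-b * R.level x)))

/-- The AI_∞-graph on `X` associated to an index map `Φ`. -/
def RootedGraph.IsAIinf {X M : Type*} [MetricSpace M] (R R' : RootedGraph X)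
    (Φ : X → Set M) : Prop :=
  R'.root = R.root ∧ ∀ x y : X, R'.G.Adj x y ↔
    (R.G.Adj x y ∨ (R.level x = R.level y ∧ x ≠ y ∧ (Φ x ∩ Φ y).Nonempty))

end

/-
If `d_h(x,y) > k + l` and `u ∈ J_m(x)`, `v ∈ J_m(y)` had `d_h(u,v) ≤ 2k + 2l`, a horizontal
geodesic from `u` to `v` would pass through a vertex `w` with `d_h(u,w) ≤ 2k` and
`d_h(w,v) ≤ 2l`. Let `z` be the ancestor of `w` at the level of `x`. Then `d_h(x,z) ≤ k`
by `(m,k)`-departure, hence `d_h(z,y) > l`, and `(m,l)`-departure gives `d_h(w,v) > 2l`.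
So departure is additive in `k`, and the theorem follows by induction on `ℓ`.
-/

namespace SimpleGraph

variable {V : Type*} {G : SimpleGraph V} {u v : V}

theorem Walk.edist_getVert_le (p : G.Walk u v) (n : ℕ) : G.edist u (p.getVert n) ≤ n :=
  (p.take n).edist_le.trans (by simp [Walk.take_length])

theorem Walk.edist_getVert_le_length_sub (p : G.Walk u v) (n : ℕ) :
    G.edist (p.getVert n) v ≤ (p.length - n : ℕ) :=
  (p.drop n).edist_le.trans (by simp [Walk.drop_length])

theorem Walk.dist_getVert_le (p : G.Walk u v) (n : ℕ) : G.dist u (p.getVert n) ≤ n :=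
  (dist_le (p.take n)).trans (by simp [Walk.take_length])

theorem Walk.dist_getVert_le_length_sub (p : G.Walk u v) (n : ℕ) :
    G.dist (p.getVert n) v ≤ p.length - n :=
  (dist_le (p.drop n)).trans (by simp [Walk.drop_length])

theorem exists_edist_le_and_edist_le_of_edist_le_add {a b : ℕ}
    (h : G.edist u v ≤ (a + b : ℕ)) : ∃ w, G.edist u w ≤ a ∧ G.edist w v ≤ b := by
  obtain ⟨p, hp⟩ := exists_walk_of_edist_ne_top (ne_top_of_le_ne_top (ENat.natCast_ne_top _) h)
  have hlen : p.length ≤ a + b := by rw [← hp] at h; exact_mod_cast h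
  exact ⟨p.getVert a, p.edist_getVert_le a,
    (p.edist_getVert_le_length_sub a).trans (by exact_mod_cast (by omega : p.length - a ≤ b))⟩

end SimpleGraph

namespace RootedGraph

variable {X : Type*} (R : RootedGraph X)

theorem level_eq_of_reachable_Gh {a b : X} (h : R.Gh.Reachable a b) : R.level a = R.level b := by
  obtain ⟨p⟩ := h
  induction p with
  | nil => rfl
  | cons hadj _ ih => exact hadj.2.trans ih

theorem level_eq_of_dh_ne_top {a b : X} (h : R.dh a b ≠ ⊤) : R.level a = R.level b :=
  R.level_eq_of_reachable_Gh (SimpleGraph.reachable_of_edist_ne_top h)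

theorem exists_mem_J_of_level_eq_add {n m : ℕ} {w : X} (hw : R.level w = n + m) :
    ∃ z, R.level z = n ∧ w ∈ R.J m z := by
  obtain ⟨p, hp⟩ := R.conn.exists_walk_length_eq_dist R.root w
  have hlen : p.length = n + m := hp.trans hw
  have hroot : R.level (p.getVert n) ≤ n := p.dist_getVert_le n
  have hdesc : R.G.dist (p.getVert n) w ≤ m := by
    have := p.dist_getVert_le_length_sub n; omega
  have htri : R.level w ≤ R.level (p.getVert n) + R.G.dist (p.getVert n) w :=
    R.conn.dist_triangle
  exact ⟨p.getVert n, by omega, by omega, by omega⟩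

variable {R} in
theorem Departing.add {m k l : ℕ} (hk : R.Departing m k) (hl : R.Departing m l) :
    R.Departing m (k + l) := by
  intro x y hxy hdxy u hu v hv
  by_contra! hduv
  obtain ⟨w, huw, hwv⟩ :=
    SimpleGraph.exists_edist_le_and_edist_le_of_edist_le_add (G := R.Gh) (a := 2 * k) (b := 2 * l)
      (hduv.trans_eq (by rw [mul_add]))
  have hw : R.level w = R.level x + m := by
    rw [← R.level_eq_of_dh_ne_top (ne_top_of_le_ne_top (ENat.natCast_ne_top _) huw), hu.1]
  obtain ⟨z, hz, hwz⟩ := R.exists_mem_J_of_level_eq_add hw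
  have hxz : R.dh x z ≤ k := by
    by_contra! hxz
    exact (hk x z hz.symm hxz u hu w hwz).not_ge huw
  have hzy : (l : ℕ∞) < R.dh z y := by
    by_contra! hzy
    have : R.dh x y ≤ (k + l : ℕ) := by
      push_cast; exact SimpleGraph.edist_triangle.trans (add_le_add hxz hzy)
    exact hdxy.not_ge this
  exact (hl z y (hz.trans hxy) hzy w hwz v hv).not_ge hwv

end RootedGraph

theorem departing_mul_general {X : Type*} (R : RootedGraph X) (m k : ℕ)
    (h : R.Departing m k) : ∀ ℓ : ℕ, 0 < ℓ → R.Departing m (ℓ * k) := by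
  intro ℓ hℓ
  induction ℓ, hℓ using Nat.le_induction with
  | base => simpa using h
  | succ ℓ _ ih => simpa [add_mul] using ih.add h

/-- Lemma 2.6: if `(X,E)` is `(m,k)`-departing then it is
`(m,ℓk)`-departing for every positive integer `ℓ`. -/
theorem departing_mul {X : Type*} (R : RootedGraph X) (m k : ℕ) (hm : 0 < m) (hk : 0 < k)
    (h : R.Departing m k) : ∀ ℓ : ℕ, 0 < ℓ → R.Departing m (ℓ * k) :=
  departing_mul_general R m k h
end

section
/- Every (1,1)-departing rooted graph is (m,k)-departing for all positive integers m and k. -/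
open SimpleGraph Metric
open scoped ENNReal ENat

namespace RootedGraph

variable {X : Type*} (R : RootedGraph X)

lemma exists_mem_J_of_mem_J_succ {m : ℕ} {x u : X} (hu : u ∈ R.J (m + 1) x) :
    ∃ w ∈ R.J m x, u ∈ R.J 1 w := by
  obtain ⟨hlevel, hdist⟩ := hu
  obtain ⟨p, hp⟩ := R.conn.exists_walk_length_eq_dist u x
  rw [dist_comm, hdist] at hp
  cases p with
  | nil => simp at hp
  | @cons _ w _ huw q =>
    have hxw : R.G.dist x w ≤ m := by
      rw [dist_comm]; have := dist_le q; simp only [Walk.length_cons] at hp; omega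
    have hwu : R.G.dist w u = 1 := dist_eq_one_iff_adj.mpr huw.symm
    have hxu : R.G.dist x u ≤ R.G.dist x w + R.G.dist w u := R.conn.dist_triangle
    have hrw : R.level w ≤ R.level x + R.G.dist x w := R.conn.dist_triangle
    have hru : R.level u ≤ R.level w + R.G.dist w u := R.conn.dist_triangle
    exact ⟨w, ⟨by omega, by omega⟩, by omega, hwu⟩

lemma exists_mem_J_one_of_level_eq_succ {n : ℕ} {u : X} (hu : R.level u = n + 1) :
    ∃ w, u ∈ R.J 1 w := by
  have hroot : R.level R.root = 0 := dist_self
  obtain ⟨w, -, huw⟩ := R.exists_mem_J_of_mem_J_succ (m := n) (x := R.root)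
    ⟨by omega, hu⟩
  exact ⟨w, huw⟩

namespace Departing

variable {R}

lemma dh_le_one_of_walk_length_le_two (h : R.Departing 1 1) {x y u v : X}
    (hxy : R.level x = R.level y) (hu : u ∈ R.J 1 x) (hv : v ∈ R.J 1 y)
    (p : R.Gh.Walk u v) (hp : p.length ≤ 2) : R.dh x y ≤ 1 := by
  have huv : R.dh u v ≤ ((2 * 1 : ℕ) : ℕ∞) := p.edist_le.trans (by exact_mod_cast hp)
  by_contra! hxy'
  exact (h x y hxy (by exact_mod_cast hxy') u hu v hv).not_ge huv

/-- The parents of the ends of a horizontal walk of length `≤ 2k` are at horizontal distance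
`≤ k`: cut the walk into pieces of length `2` and take a parent of each cut point. -/
lemma dh_le_of_walk_length_le (h : R.Departing 1 1) {k : ℕ} (hk : 1 ≤ k) :
    ∀ {x y u v : X} (p : R.Gh.Walk u v), p.length ≤ 2 * k → R.level x = R.level y →
      u ∈ R.J 1 x → v ∈ R.J 1 y → R.dh x y ≤ k := by
  induction k, hk using Nat.le_induction with
  | base =>
    intro x y u v p hp hxy hu hv
    exact_mod_cast h.dh_le_one_of_walk_length_le_two hxy hu hv p hp
  | succ k _ ih =>
    intro x y u v p hp hxy hu hv
    by_cases hp₂ : p.length ≤ 2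
    · exact (h.dh_le_one_of_walk_length_le_two hxy hu hv p hp₂).trans
        (by exact_mod_cast Nat.le_add_left 1 k)
    cases p with
    | nil => simp at hp₂
    | cons hub p =>
      cases p with
      | nil => simp at hp₂
      | @cons _ c _ hbc q =>
        have hc : R.level c = R.level x + 1 := by rw [← hbc.2, ← hub.2, hu.1]
        obtain ⟨z, hz⟩ := R.exists_mem_J_one_of_level_eq_succ hc
        have hzx : R.level x = R.level z := by have := hz.1; omega
        have hxz : R.dh x z ≤ 1 := h.dh_le_one_of_walk_length_le_two hzx hu hz
          (.cons hub (.cons hbc .nil)) (by simp)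
        have hzy : R.dh z y ≤ k := ih q (by simp at hp; omega) (hzx ▸ hxy) hz hv
        calc R.dh x y ≤ R.dh x z + R.dh z y := SimpleGraph.edist_triangle
          _ ≤ 1 + k := add_le_add hxz hzy
          _ = (k + 1 : ℕ) := by push_cast; ring

lemma one_of_one_one (h : R.Departing 1 1) {k : ℕ} (hk : 0 < k) : R.Departing 1 k := by
  intro x y hxy hk' u hu v hv
  by_contra! huv
  obtain ⟨p, hp⟩ := exists_walk_of_edist_ne_top (ne_top_of_le_ne_top (ENat.natCast_ne_top _) huv)
  have hlen : p.length ≤ 2 * k := by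
    have : (p.length : ℕ∞) ≤ ((2 * k : ℕ) : ℕ∞) := by rw [hp]; exact huv
    exact_mod_cast this
  exact hk'.not_ge (h.dh_le_of_walk_length_le hk p hlen hxy hu hv)

lemma succ {m k : ℕ} (h₁ : R.Departing 1 k) (hm : R.Departing m k) :
    R.Departing (m + 1) k := by
  intro x y hxy hk u hu v hv
  obtain ⟨w, hw, huw⟩ := R.exists_mem_J_of_mem_J_succ hu
  obtain ⟨w', hw', hvw'⟩ := R.exists_mem_J_of_mem_J_succ hv
  have hww' : ((2 * k : ℕ) : ℕ∞) < R.dh w w' := hm x y hxy hk w hw w' hw'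
  refine h₁ w w' (by rw [hw.1, hw'.1, hxy]) (lt_of_le_of_lt ?_ hww') u huw v hvw'
  exact_mod_cast Nat.le_mul_of_pos_left k two_pos

end Departing

end RootedGraph

/-- Corollary 2.7: every `(1,1)`-departing rooted graph is
`(m,k)`-departing for all positive integers `m`, `k`. -/
theorem departing_of_one_one {X : Type*} (R : RootedGraph X) (h : R.Departing 1 1) :
    ∀ m k : ℕ, 0 < m → 0 < k → R.Departing m k := by
  intro m k hm hk
  induction m, hm using Nat.le_induction with
  | base => exact h.one_of_one_one hk
  | succ m _ ih => exact (h.one_of_one_one hk).succ ih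
end

section
/- In an expansive rooted graph, any two vertices x, y can be joined by a convex geodesic, i.e., a geodesic [x_0,…,x_n] with x_0=x, x_n=y satisfying |x_i| ≤ (|x_{i-1}|+|x_{i+1}|)/2 for all 0 < i < n. -/
open SimpleGraph Metric
open scoped ENNReal ENat

/-!
Among the geodesics from `x` to `y`, take one minimizing the sum of the levels of its vertices.
Levels change by at most one along an edge, so a failure of convexity at an inner vertex `b`
with neighbours `a`, `c` means that `b` is a child of both, or (up to symmetry) a child of `a`
and horizontally adjacent to `c`. Expansiveness then makes `a` and `c`, respectively `a` and a
parent `w` of `c`, equal or adjacent. Since `a` and `c` are at distance two, the only surviving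
case is `a ~ w`, and replacing `b` by the lower vertex `w` decreases the level sum.
-/

open Finset

namespace SimpleGraph

variable {V : Type*} {G : SimpleGraph V} {u v : V}

lemma ne_and_not_adj_of_dist_eq_two (h : G.dist u v = 2) : u ≠ v ∧ ¬G.Adj u v :=
  ⟨fun huv => by simp [huv] at h, fun huv => by simp [dist_eq_one_iff_adj.2 huv] at h⟩

namespace Walk

lemma dist_getVert_getVert_of_length_eq_dist (p : G.Walk u v) (hp : p.length = G.dist u v)
    {i j : ℕ} (hij : i ≤ j) (hj : j ≤ p.length) :
    G.dist (p.getVert i) (p.getVert j) = j - i := by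
  have hsub : ((p.drop i).take (j - i)).IsSubwalk p :=
    ((p.drop i).isSubwalk_take _).trans (p.isSubwalk_drop i)
  have := length_eq_dist_of_subwalk hp hsub
  simp only [take_length, drop_length, drop_getVert, Nat.add_sub_cancel' hij] at this
  rw [← this]
  omega

lemma exists_getVert_eq_update (p : G.Walk u v) {i : ℕ} (hi : i + 2 ≤ p.length) {z : V}
    (h₁ : G.Adj (p.getVert i) z) (h₂ : G.Adj z (p.getVert (i + 2))) :
    ∃ q : G.Walk u v, q.length = p.length ∧ q.getVert = Function.update p.getVert (i + 1) z := by
  induction i generalizing u with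
  | zero =>
    match p, hi with
    | cons _ (cons (v := w) _ t), _ =>
      have h₁' : G.Adj u z := by simpa using h₁
      have h₂' : G.Adj z w := by simpa using h₂
      refine ⟨cons h₁' (cons h₂' t), rfl, funext fun k => ?_⟩
      rcases k with _ | _ | k <;> simp
  | succ i ih =>
    match p, hi with
    | cons h t, hi =>
      obtain ⟨q, hlen, hq⟩ := ih t (by simpa using hi) (by simpa using h₁) (by simpa using h₂)
      refine ⟨cons h q, by simp [hlen], funext fun k => ?_⟩
      rcases k with _ | k
      · simp
      · simp [hq, Function.update_apply]

end Walk

end SimpleGraph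

namespace RootedGraph

variable {X : Type*} {R : RootedGraph X}

lemma level_le_level_add_one_of_adj {u v : X} (h : R.G.Adj u v) : R.level v ≤ R.level u + 1 := by
  have := R.conn.dist_triangle (u := R.root) (v := u) (w := v)
  rw [dist_eq_one_iff_adj.2 h] at this
  exact this

lemma mem_J_one_iff {x v : X} : v ∈ R.J 1 x ↔ R.G.Adj x v ∧ R.level v = R.level x + 1 := by
  simp [J, dist_eq_one_iff_adj, and_comm]

lemma exists_mem_J_one_of_level_pos {v : X} (hv : 0 < R.level v) : ∃ x, v ∈ R.J 1 x := by
  obtain ⟨p, hp⟩ := R.conn.exists_walk_length_eq_dist R.root v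
  have hlen : p.length = R.level v := hp
  refine ⟨p.getVert (p.length - 1), mem_J_one_iff.2 ⟨?_, ?_⟩⟩
  · have := p.adj_getVert_succ (i := p.length - 1) (by omega)
    rwa [Nat.sub_add_cancel (by omega), p.getVert_length] at this
  · have := p.dist_getVert_getVert_of_length_eq_dist hp (Nat.zero_le _) (Nat.sub_le _ 1)
    rw [Walk.getVert_zero] at this
    simp only [level, this]
    omega

lemma dh_le_one_iff {x y : X} : R.dh x y ≤ 1 ↔ x = y ∨ R.Gh.Adj x y := by
  rw [dh, edist_le_one_iff_adj_or_eq, or_comm]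

lemma Expansive.dh_le_one_of_mem_J_one (hexp : R.Expansive) {x y u v : X}
    (hxy : R.level x = R.level y) (hu : u ∈ R.J 1 x) (hv : v ∈ R.J 1 y) (huv : R.dh u v ≤ 1) :
    R.dh x y ≤ 1 := by
  by_contra! h
  exact (hexp x y hxy h u hu v hv).not_ge huv

lemma Expansive.exists_adj_adj_level_lt_of_mem_J_one (hexp : R.Expansive) {a b c : X}
    (hb : b ∈ R.J 1 a) (hbc : R.G.Adj b c) (hc : R.level c ≤ R.level b) (hac : a ≠ c)
    (hnac : ¬R.G.Adj a c) : ∃ z, R.G.Adj a z ∧ R.G.Adj z c ∧ R.level z < R.level b := by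
  have hba := (mem_J_one_iff.1 hb).2
  have hcb := level_le_level_add_one_of_adj hbc.symm
  rcases (by omega : R.level b = R.level c + 1 ∨ R.level c = R.level b) with hpeak | hflat
  · have hbb : R.dh b b ≤ 1 := by simp [dh]
    have := hexp.dh_le_one_of_mem_J_one (by omega) hb (mem_J_one_iff.2 ⟨hbc.symm, hpeak⟩) hbb
    rcases dh_le_one_iff.1 this with h | h
    · exact absurd h hac
    · exact absurd h.1 hnac
  · obtain ⟨w, hw⟩ := exists_mem_J_one_of_level_pos (R := R) (v := c) (by omega)
    have hbc' : R.dh b c ≤ 1 := dh_le_one_iff.2 (Or.inr ⟨hbc, hflat.symm⟩)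
    have hwc := mem_J_one_iff.1 hw
    rcases dh_le_one_iff.1 (hexp.dh_le_one_of_mem_J_one (by omega) hb hw hbc') with rfl | h
    · exact absurd hwc.1 hnac
    · exact ⟨w, h.1, hwc.1, by omega⟩

lemma Expansive.exists_adj_adj_level_lt (hexp : R.Expansive) {a b c : X}
    (hab : R.G.Adj a b) (hbc : R.G.Adj b c) (hac : a ≠ c) (hnac : ¬R.G.Adj a c)
    (hconv : R.level a + R.level c < 2 * R.level b) :
    ∃ z, R.G.Adj a z ∧ R.G.Adj z c ∧ R.level z < R.level b := by
  have := level_le_level_add_one_of_adj hab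
  have := level_le_level_add_one_of_adj hab.symm
  have := level_le_level_add_one_of_adj hbc
  have := level_le_level_add_one_of_adj hbc.symm
  rcases (by omega : R.level b = R.level a + 1 ∧ R.level c ≤ R.level b ∨
      R.level b = R.level c + 1 ∧ R.level a ≤ R.level b) with ⟨hb, hc⟩ | ⟨hb, ha⟩
  · exact hexp.exists_adj_adj_level_lt_of_mem_J_one (mem_J_one_iff.2 ⟨hab, hb⟩) hbc hc hac hnac
  · obtain ⟨z, hcz, hza, hz⟩ := hexp.exists_adj_adj_level_lt_of_mem_J_one
      (mem_J_one_iff.2 ⟨hbc.symm, hb⟩) hab.symm ha hac.symm (fun h => hnac h.symm)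
    exact ⟨z, hza.symm, hcz.symm, hz⟩

noncomputable def levelSum {x y : X} (p : R.G.Walk x y) : ℕ :=
  ∑ k ∈ range (p.length + 1), R.level (p.getVert k)

lemma exists_levelSum_lt {x y z : X} (p : R.G.Walk x y) {i : ℕ} (hi : i + 2 ≤ p.length)
    (h₁ : R.G.Adj (p.getVert i) z) (h₂ : R.G.Adj z (p.getVert (i + 2)))
    (hz : R.level z < R.level (p.getVert (i + 1))) :
    ∃ q : R.G.Walk x y, q.length = p.length ∧ R.levelSum q < R.levelSum p := by
  obtain ⟨q, hlen, hq⟩ := p.exists_getVert_eq_update hi h₁ h₂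
  refine ⟨q, hlen, ?_⟩
  unfold levelSum
  rw [hlen, hq]
  apply sum_lt_sum
  · intro k _
    rcases eq_or_ne k (i + 1) with rfl | hk
    · simpa using hz.le
    · simp [hk]
  · exact ⟨i + 1, mem_range.2 (by omega), by simpa using hz⟩

end RootedGraph

/-- Proposition 2.3: in an expansive rooted graph, any two vertices are
joined by a convex geodesic. -/
theorem exists_convex_geodesic {X : Type*} (R : RootedGraph X) (hexp : R.Expansive)
    (x y : X) :
    ∃ p : R.G.Walk x y, p.length = R.G.dist x y ∧
      ∀ i : ℕ, i + 2 ≤ p.length →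
        2 * R.level (p.getVert (i + 1)) ≤ R.level (p.getVert i) + R.level (p.getVert (i + 2)) := by
  obtain ⟨p, hmin⟩ := exists_minimalFor_of_wellFoundedLT
    (fun p : R.G.Walk x y => p.length = R.G.dist x y) R.levelSum
    (R.conn.exists_walk_length_eq_dist x y)
  have hp : p.length = R.G.dist x y := hmin.prop
  refine ⟨p, hp, fun i hi => ?_⟩
  by_contra! hconv
  have hdist := p.dist_getVert_getVert_of_length_eq_dist hp (Nat.le_add_right i 2) hi
  rw [Nat.add_sub_cancel_left] at hdist
  obtain ⟨hne, hnadj⟩ := ne_and_not_adj_of_dist_eq_two hdist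
  obtain ⟨z, h₁, h₂, hz⟩ := hexp.exists_adj_adj_level_lt (p.adj_getVert_succ (by omega))
    (p.adj_getVert_succ (by omega)) hne hnadj hconv
  obtain ⟨q, hlen, hlt⟩ := R.exists_levelSum_lt p hi h₁ h₂ hz
  exact hmin.not_lt (hlen.trans hp) hlt
end

section
/- For an expansive rooted graph (X,E), the following are equivalent: (i) (X,E) is Gromov hyperbolic; (ii) there exists L < ∞ bounding the lengths of all horizontal geodesics; (iii) (X,E) is (m,k)-departing for some positive integers m, k. Moreover, if all horizontal geodesics have length at most L, then (X,E) is (L+1, L+2)-departing. -/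
open SimpleGraph Metric
open scoped ENNReal ENat

/-!
Expansiveness makes passing to ancestors (almost) non-expanding for the horizontal distance
`d_h`, and it forces every geodesic from `x` to `y` into the shape "up, across, down": there is
a level `Λ` and ancestors `a`, `b` of `x`, `y` on it with
`d_h(a,b) + (|x| - Λ) + (|y| - Λ) ≤ d(x,y)`.

If horizontal geodesics have length at most `L`, a horizontal segment longer than `L` is not a
geodesic, so the up-across-down shortcut strictly gains; by induction, vertices at horizontal
distance `≤ 2j + 2` have ancestors `j` levels up at horizontal distance `≤ L`. This gives the
`(L+1, L+2)`-departing property, and shows that `2 (x|y)` is within `L` of twice the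
confluence level of `x` and `y` (the highest level carrying `L`-close ancestors of both), which is
ultrametric up to `L`; hence hyperbolicity.

Conversely, the midpoint of a horizontal geodesic of length `ℓ` violates the `δ`-inequality once
`ℓ > 4δ + 1`; and `t` applications of the `(m,k)`-departing property shrink horizontal distance
`2^t k` to `k` after `t m` generations, so a horizontal geodesic cannot be longer than
`2 t m + k` once `2 t m + k < 2^t`.
-/

namespace SimpleGraph

variable {V : Type*} {G : SimpleGraph V}

lemma exists_edist_le_edist_le {x y : V} {m n : ℕ} (h : G.edist x y ≤ m + n) :
    ∃ w, G.edist x w ≤ m ∧ G.edist w y ≤ n := by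
  have hr : G.Reachable x y := edist_ne_top_iff_reachable.mp (ne_top_of_le_ne_top (by simp) h)
  obtain ⟨p, hp⟩ := hr.exists_walk_length_eq_edist
  rw [← hp] at h
  have hlen : p.length ≤ m + n := by exact_mod_cast h
  refine ⟨p.getVert m, (edist_le (p.take m)).trans ?_, (edist_le (p.drop m)).trans ?_⟩
  · rw [Walk.take_length]
    exact_mod_cast min_le_left _ _
  · rw [Walk.drop_length]
    exact_mod_cast (by omega : p.length - m ≤ n)

end SimpleGraph

lemma Nat.exists_mul_add_lt_two_pow (a b : ℕ) : ∃ t, a * t + b < 2 ^ t := by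
  obtain ⟨s, hs_def⟩ : ∃ s, s = 2 * a + b + 1 := ⟨_, rfl⟩
  have hs : s < 2 ^ s := Nat.lt_two_pow_self
  refine ⟨2 * s, ?_⟩
  calc a * (2 * s) + b < s * s := by subst hs_def; nlinarith
    _ ≤ 2 ^ s * 2 ^ s := Nat.mul_self_le_mul_self hs.le
    _ = 2 ^ (2 * s) := by ring

namespace RootedGraph

open SimpleGraph

variable {X : Type*} (R : RootedGraph X)

def HorizGeodesicBound (L : ℕ) : Prop :=
  ∀ x y : X, R.dh x y = (R.G.dist x y : ℕ∞) → R.dh x y ≤ (L : ℕ∞)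

lemma dh_comm (x y : X) : R.dh x y = R.dh y x := edist_comm

lemma dh_self (x : X) : R.dh x x = 0 := edist_self

lemma dh_le_add {x y z : X} {m n : ℕ} (h₁ : R.dh x y ≤ m) (h₂ : R.dh y z ≤ n) :
    R.dh x z ≤ (m + n : ℕ) := by
  push_cast
  exact SimpleGraph.edist_triangle.trans (add_le_add h₁ h₂)

lemma level_eq_of_walk {x y : X} (p : R.Gh.Walk x y) : R.level x = R.level y := by
  induction p with
  | nil => rfl
  | cons h _ ih => exact h.2.trans ih

lemma level_eq_of_dh_le {x y : X} {n : ℕ} (h : R.dh x y ≤ n) : R.level x = R.level y :=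
  R.level_eq_of_walk
    (edist_ne_top_iff_reachable.mp (ne_top_of_le_ne_top (ENat.natCast_ne_top n) h)).some

lemma dist_le_dh (x y : X) : (R.G.dist x y : ℕ∞) ≤ R.dh x y := by
  rw [(R.conn x y).coe_dist_eq_edist]
  exact edist_anti fun _ _ h => h.1

lemma dist_le_of_dh_le {x y : X} {n : ℕ} (h : R.dh x y ≤ n) : R.G.dist x y ≤ n := by
  exact_mod_cast (R.dist_le_dh x y).trans h

lemma level_le_level_add_dist (x y : X) : R.level y ≤ R.level x + R.G.dist x y :=
  R.conn.dist_triangle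

lemma mem_J_zero {x y : X} : y ∈ R.J 0 x ↔ y = x :=
  ⟨fun h => (R.conn.dist_eq_zero_iff.mp h.2).symm, by rintro rfl; exact ⟨rfl, dist_self⟩⟩

lemma mem_J_level_root (x : X) : x ∈ R.J (R.level x) R.root :=
  ⟨by simp [level], rfl⟩

lemma mem_J_trans {a p w : X} {r s n : ℕ} (h₁ : p ∈ R.J r a) (h₂ : w ∈ R.J s p)
    (hn : r + s = n) : w ∈ R.J n a := by
  have hlev := R.level_le_level_add_dist a w
  have htri : R.G.dist a w ≤ R.G.dist a p + R.G.dist p w := R.conn.dist_triangle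
  rw [h₁.2, h₂.2] at htri
  rw [h₂.1, h₁.1] at hlev
  exact ⟨by rw [h₂.1, h₁.1]; omega, by omega⟩

lemma exists_mem_J_of_mem_J_add {a w : X} {r s : ℕ} (h : w ∈ R.J (r + s) a) :
    ∃ p, p ∈ R.J r a ∧ w ∈ R.J s p := by
  obtain ⟨W, hW⟩ := R.conn.exists_walk_length_eq_dist a w
  have h₁ := dist_le (W.take r)
  have h₂ := dist_le (W.drop r)
  rw [Walk.take_length] at h₁
  rw [Walk.drop_length] at h₂
  have h₃ := R.level_le_level_add_dist a (W.getVert r)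
  have h₄ := R.level_le_level_add_dist (W.getVert r) w
  have h₅ := R.level_le_level_add_dist a w
  obtain ⟨hl, hd⟩ := h
  exact ⟨W.getVert r, ⟨by omega, by omega⟩, by omega, by omega⟩

lemma exists_mem_J {w : X} {r : ℕ} (h : r ≤ R.level w) : ∃ a, w ∈ R.J r a := by
  have hw := R.mem_J_level_root w
  rw [← Nat.sub_add_cancel h] at hw
  obtain ⟨a, -, ha⟩ := R.exists_mem_J_of_mem_J_add hw
  exact ⟨a, ha⟩

lemma dist_le_of_mem_J {x y a b : X} {r s n : ℕ} (ha : x ∈ R.J r a) (hb : y ∈ R.J s b)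
    (hab : R.dh a b ≤ n) : R.G.dist x y ≤ r + n + s := by
  have h₁ : R.G.dist x y ≤ R.G.dist x a + R.G.dist a y := R.conn.dist_triangle
  have h₂ : R.G.dist a y ≤ R.G.dist a b + R.G.dist b y := R.conn.dist_triangle
  have h₃ := R.dist_le_of_dh_le hab
  rw [SimpleGraph.dist_comm (u := x) (v := a), ha.2] at h₁
  rw [hb.2] at h₂
  omega

lemma dh_le_one_of_mem_J (hexp : R.Expansive) {r : ℕ} {a b u v : X} (ha : u ∈ R.J r a)
    (hb : v ∈ R.J r b) (huv : R.dh u v ≤ 1) : R.dh a b ≤ 1 := by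
  induction r generalizing u v with
  | zero => rwa [R.mem_J_zero.mp ha, R.mem_J_zero.mp hb] at huv
  | succ r ih =>
    obtain ⟨p, hap, hpu⟩ := R.exists_mem_J_of_mem_J_add ha
    obtain ⟨q, hbq, hqv⟩ := R.exists_mem_J_of_mem_J_add hb
    have hlev := R.level_eq_of_dh_le (n := 1) huv
    rw [hpu.1, hqv.1] at hlev
    refine ih hap hbq (not_lt.mp fun hpq => ?_)
    exact (hexp p q (by omega) hpq u hpu v hqv).not_ge huv

lemma exists_mem_J_dh_le_length (hexp : R.Expansive) {r : ℕ} {u v : X} (p : R.Gh.Walk u v) {a : X}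
    (ha : u ∈ R.J r a) : ∃ b, v ∈ R.J r b ∧ R.dh a b ≤ p.length := by
  induction p generalizing a with
  | nil => exact ⟨a, ha, by simp [dh_self]⟩
  | @cons u w v h p ih =>
    obtain ⟨a', ha'⟩ := R.exists_mem_J (w := w) (r := r) (by rw [← h.2, ha.1]; omega)
    obtain ⟨b, hb, hab⟩ := ih ha'
    have haa' := R.dh_le_one_of_mem_J hexp ha ha' (edist_eq_one_iff_adj.mpr h).le
    refine ⟨b, hb, ?_⟩
    rw [Walk.length_cons, add_comm]
    exact R.dh_le_add haa' hab

lemma exists_mem_J_dh_le (hexp : R.Expansive) {r : ℕ} {a u v : X} (ha : u ∈ R.J r a)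
    (huv : R.level u = R.level v) : ∃ b, v ∈ R.J r b ∧ R.dh a b ≤ R.dh u v := by
  by_cases h : R.dh u v = ⊤
  · obtain ⟨b, hb⟩ := R.exists_mem_J (w := v) (r := r) (by rw [← huv, ha.1]; omega)
    exact ⟨b, hb, h ▸ le_top⟩
  · obtain ⟨p, hp⟩ := (edist_ne_top_iff_reachable.mp h).exists_walk_length_eq_edist
    rw [dh, ← hp]
    exact R.exists_mem_J_dh_le_length hexp p ha

lemma exists_mem_J_of_walk (hexp : R.Expansive) {w z : X} (W : R.G.Walk w z)
    (hW : ∀ v ∈ W.support, R.level z ≤ R.level v) :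
    ∃ b, ∃ n : ℕ, w ∈ R.J (R.level w - R.level z) b ∧ R.dh z b ≤ n ∧
      n + (R.level w - R.level z) ≤ W.length := by
  induction W with
  | nil => exact ⟨_, 0, by simpa using R.mem_J_zero.mpr rfl, by simp [dh_self], by simp⟩
  | @cons w σ z h W ih =>
    obtain ⟨b₁, n₁, hσ, hzb₁, hn₁⟩ := ih fun v hv => hW v (by simp [hv])
    have hwz := hW w (by simp)
    have hσz := hW σ (by simp)
    have h₁ := R.level_le_level_add_dist w σ
    have h₂ := R.level_le_level_add_dist σ w
    rw [dist_eq_one_iff_adj.mpr h] at h₁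
    rw [dist_eq_one_iff_adj.mpr h.symm] at h₂
    rw [Walk.length_cons]
    by_cases hup : R.level w = R.level σ + 1
    · exact ⟨b₁, n₁, R.mem_J_trans hσ ⟨hup, dist_eq_one_iff_adj.mpr h.symm⟩ (by omega),
        hzb₁, by omega⟩
    obtain ⟨b, hb⟩ := R.exists_mem_J (w := w) (r := R.level w - R.level z) (by omega)
    have hb₁b : R.dh b₁ b ≤ 1 := by
      by_cases hdown : R.level σ = R.level w + 1
      · have hσb : σ ∈ R.J (R.level σ - R.level z) b :=
          R.mem_J_trans hb ⟨hdown, dist_eq_one_iff_adj.mpr h⟩ (by omega)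
        exact R.dh_le_one_of_mem_J hexp hσ hσb (by simp [dh_self])
      · have hlev : R.level w = R.level σ := by omega
        rw [hlev] at hb
        have hσw : R.Gh.Adj σ w := ⟨h.symm, hlev.symm⟩
        exact R.dh_le_one_of_mem_J hexp hσ hb (edist_eq_one_iff_adj.mpr hσw).le
    exact ⟨b, n₁ + 1, hb, R.dh_le_add hzb₁ hb₁b, by omega⟩

-- Project both halves of a geodesic onto the level of its lowest vertex.
lemma exists_mem_J_add_le_dist (hexp : R.Expansive) (x y : X) :
    ∃ (Λ : ℕ) (a b : X) (n : ℕ), Λ ≤ R.level x ∧ Λ ≤ R.level y ∧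
      x ∈ R.J (R.level x - Λ) a ∧ y ∈ R.J (R.level y - Λ) b ∧ R.dh a b ≤ n ∧
      n + (R.level x - Λ) + (R.level y - Λ) ≤ R.G.dist x y := by
  classical
  obtain ⟨W, hW⟩ := R.conn.exists_walk_length_eq_dist x y
  obtain ⟨z, hz, hmin⟩ := W.support.toFinset.exists_min_image R.level ⟨x, by simp⟩
  simp only [List.mem_toFinset] at hz hmin
  obtain ⟨a, n₁, ha, hza, hn₁⟩ := R.exists_mem_J_of_walk hexp (W.takeUntil z hz)
    fun v hv => hmin v (W.support_takeUntil_subset_support hz hv)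
  obtain ⟨b, n₂, hb, hzb, hn₂⟩ := R.exists_mem_J_of_walk hexp (W.dropUntil z hz).reverse
    fun v hv => hmin v (W.support_dropUntil_subset_support hz (by simpa using hv))
  have hlen := congrArg Walk.length (W.take_spec hz)
  rw [Walk.length_append] at hlen
  rw [Walk.length_reverse] at hn₂
  rw [R.dh_comm] at hza
  exact ⟨R.level z, a, b, n₁ + n₂, hmin x W.start_mem_support, hmin y W.end_mem_support,
    ha, hb, R.dh_le_add hza hzb, by omega⟩

section HorizGeodesicBound

variable {L : ℕ}

lemma exists_mem_J_dh_add_two_mul_lt (hexp : R.Expansive) (hL : R.HorizGeodesicBound L)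
    {a b : X} (hab : R.level a = R.level b) (hlt : (L : ℕ∞) < R.dh a b) :
    ∃ (h : ℕ) (a' b' : X), 0 < h ∧ a ∈ R.J h a' ∧ b ∈ R.J h b' ∧
      R.dh a' b' + (2 * h : ℕ) < R.dh a b := by
  obtain ⟨Λ, a', b', n, -, -, ha', hb', hn, hdist⟩ := R.exists_mem_J_add_le_dist hexp a b
  have hdist_lt : (R.G.dist a b : ℕ∞) < R.dh a b :=
    (R.dist_le_dh a b).lt_of_ne fun h => hlt.not_ge (hL a b h.symm)
  rw [← hab] at hb' hdist
  refine ⟨R.level a - Λ, a', b', Nat.pos_of_ne_zero fun h0 => ?_, ha', hb', ?_⟩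
  · rw [h0, R.mem_J_zero] at ha' hb'
    subst ha' hb'
    exact (hn.trans (Nat.cast_le.mpr (by omega))).not_gt hdist_lt
  · calc R.dh a' b' + ((2 * (R.level a - Λ) : ℕ) : ℕ∞)
        ≤ ((n + 2 * (R.level a - Λ) : ℕ) : ℕ∞) := by push_cast; gcongr
      _ ≤ R.G.dist a b := Nat.cast_le.mpr (by omega)
      _ < R.dh a b := hdist_lt

lemma exists_mem_J_dh_le_of_dh_le (hexp : R.Expansive) (hL : R.HorizGeodesicBound L) (j : ℕ)
    {a b : X} (hab : R.level a = R.level b) (hj : j ≤ R.level a)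
    (hd : R.dh a b ≤ (2 * j + 2 : ℕ)) :
    ∃ a₀ b₀, a ∈ R.J j a₀ ∧ b ∈ R.J j b₀ ∧ R.dh a₀ b₀ ≤ L := by
  induction j using Nat.strong_induction_on generalizing a b with
  | _ j ih =>
  by_cases hsmall : R.dh a b ≤ L
  · obtain ⟨a₀, ha₀⟩ := R.exists_mem_J hj
    obtain ⟨b₀, hb₀, hab₀⟩ := R.exists_mem_J_dh_le hexp ha₀ hab
    exact ⟨a₀, b₀, ha₀, hb₀, hab₀.trans hsmall⟩
  obtain ⟨h, a', b', hh, ha', hb', hlt⟩ :=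
    R.exists_mem_J_dh_add_two_mul_lt hexp hL hab (not_le.mp hsmall)
  obtain ⟨c, hc⟩ := ENat.ne_top_iff_exists.mp
    (ne_top_of_lt (lt_of_le_of_lt le_self_add (hlt.trans_le hd)))
  rw [← hc] at hlt
  have hch : c + 2 * h < 2 * j + 2 := by exact_mod_cast hlt.trans_le hd
  obtain ⟨a₀, b₀, ha₀, hb₀, hab₀⟩ := ih (j - h) (by omega) (a := a') (b := b')
    (by have := ha'.1; have := hb'.1; omega) (by have := ha'.1; omega)
    (by rw [← hc]; exact Nat.cast_le.mpr (by omega))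
  exact ⟨a₀, b₀, R.mem_J_trans ha₀ ha' (by omega), R.mem_J_trans hb₀ hb' (by omega),
    hab₀⟩

theorem departing_of_horizGeodesicBound (hexp : R.Expansive) (hL : R.HorizGeodesicBound L) :
    R.Departing (L + 1) (L + 2) := by
  intro x y hxy hk u hu v hv
  by_contra! huv
  obtain ⟨a, b, hua, hvb, hab⟩ := R.exists_mem_J_dh_le_of_dh_le hexp hL (L + 1)
    (by rw [hu.1, hv.1, hxy]) (by rw [hu.1]; omega) (huv.trans_eq (by ring_nf))
  have hxa := R.dh_le_one_of_mem_J hexp hu hua (by simp [dh_self])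
  have hby := R.dh_le_one_of_mem_J hexp hvb hv (by simp [dh_self])
  exact hk.not_ge ((R.dh_le_add (R.dh_le_add hxa hab) hby).trans_eq (by ring_nf))

/-- `x` and `y` have ancestors on level `Λ` at horizontal distance at most `k`. -/
def CloseAncestorsAt (k : ℕ) (x y : X) (Λ : ℕ) : Prop :=
  ∃ a b, x ∈ R.J (R.level x - Λ) a ∧ y ∈ R.J (R.level y - Λ) b ∧ R.dh a b ≤ k

open Classical in
noncomputable def confluenceLevel (k : ℕ) (x y : X) : ℕ :=
  Nat.findGreatest (R.CloseAncestorsAt k x y) (min (R.level x) (R.level y))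

lemma confluenceLevel_le_left (k : ℕ) (x y : X) : R.confluenceLevel k x y ≤ R.level x := by
  classical
  exact (Nat.findGreatest_le (P := R.CloseAncestorsAt k x y) _).trans (min_le_left _ _)

lemma confluenceLevel_le_right (k : ℕ) (x y : X) : R.confluenceLevel k x y ≤ R.level y := by
  classical
  exact (Nat.findGreatest_le (P := R.CloseAncestorsAt k x y) _).trans (min_le_right _ _)

lemma exists_mem_J_confluenceLevel (k : ℕ) (x y : X) :
    ∃ a b, x ∈ R.J (R.level x - R.confluenceLevel k x y) a ∧
      y ∈ R.J (R.level y - R.confluenceLevel k x y) b ∧ R.dh a b ≤ k := by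
  classical
  exact Nat.findGreatest_spec (P := R.CloseAncestorsAt k x y) (Nat.zero_le _)
    ⟨R.root, R.root, R.mem_J_level_root x, R.mem_J_level_root y, by simp [dh_self]⟩

lemma le_confluenceLevel {k Λ : ℕ} {x y a b : X} (hx : Λ ≤ R.level x) (hy : Λ ≤ R.level y)
    (ha : x ∈ R.J (R.level x - Λ) a) (hb : y ∈ R.J (R.level y - Λ) b) (hab : R.dh a b ≤ k) :
    Λ ≤ R.confluenceLevel k x y := by
  classical
  exact Nat.le_findGreatest (P := R.CloseAncestorsAt k x y) (le_min hx hy) ⟨a, b, ha, hb, hab⟩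

lemma dist_add_two_mul_confluenceLevel_le (k : ℕ) (x y : X) :
    R.G.dist x y + 2 * R.confluenceLevel k x y ≤ R.level x + R.level y + k := by
  obtain ⟨a, b, ha, hb, hab⟩ := R.exists_mem_J_confluenceLevel k x y
  have := R.dist_le_of_mem_J ha hb hab
  have := R.confluenceLevel_le_left k x y
  have := R.confluenceLevel_le_right k x y
  omega

lemma two_mul_sub_confluenceLevel_lt_dh (hexp : R.Expansive) (hL : R.HorizGeodesicBound L)
    {Λ : ℕ} {x y a b : X} (hx : Λ ≤ R.level x) (hy : Λ ≤ R.level y)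
    (ha : x ∈ R.J (R.level x - Λ) a) (hb : y ∈ R.J (R.level y - Λ) b)
    (hΛ : R.confluenceLevel L x y < Λ) :
    ((2 * (Λ - R.confluenceLevel L x y) : ℕ) : ℕ∞) < R.dh a b := by
  by_contra! hle
  have hla := ha.1
  have hlb := hb.1
  obtain ⟨a₀, b₀, ha₀, hb₀, hab₀⟩ :=
    R.exists_mem_J_dh_le_of_dh_le hexp hL (Λ - R.confluenceLevel L x y - 1) (by omega)
      (by omega) (hle.trans (Nat.cast_le.mpr (by omega)))
  have := R.le_confluenceLevel (Λ := R.confluenceLevel L x y + 1) (by omega) (by omega)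
    (R.mem_J_trans ha₀ ha (by omega)) (R.mem_J_trans hb₀ hb (by omega)) hab₀
  omega

lemma level_add_level_le_dist_add_two_mul_confluenceLevel (hexp : R.Expansive)
    (hL : R.HorizGeodesicBound L) (x y : X) :
    R.level x + R.level y ≤ R.G.dist x y + 2 * R.confluenceLevel L x y := by
  obtain ⟨Λ, a, b, n, hx, hy, ha, hb, hn, hdist⟩ := R.exists_mem_J_add_le_dist hexp x y
  by_cases hΛ : Λ ≤ R.confluenceLevel L x y
  · omega
  have hlt := R.two_mul_sub_confluenceLevel_lt_dh hexp hL hx hy ha hb (not_le.mp hΛ)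
  have : 2 * (Λ - R.confluenceLevel L x y) < n := by exact_mod_cast hlt.trans_le hn
  omega

-- On the level `Λ` the two ancestors of `z` are `1`-close, so `x` and `y` have
-- `(2L+1)`-close ancestors there.
lemma min_confluenceLevel_le (hexp : R.Expansive) (hL : R.HorizGeodesicBound L) (x y z : X) :
    min (R.confluenceLevel L x z) (R.confluenceLevel L z y) ≤ R.confluenceLevel L x y + L := by
  set Λ := min (R.confluenceLevel L x z) (R.confluenceLevel L z y)
  by_contra! hlt
  obtain ⟨a₁, c₁, ha₁, hc₁, hac₁⟩ := R.exists_mem_J_confluenceLevel L x z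
  obtain ⟨c₂, b₂, hc₂, hb₂, hcb₂⟩ := R.exists_mem_J_confluenceLevel L z y
  have := R.confluenceLevel_le_left L x z
  have := R.confluenceLevel_le_right L x z
  have := R.confluenceLevel_le_left L z y
  have := R.confluenceLevel_le_right L z y
  have := ha₁.1; have := hc₁.1; have := hc₂.1; have := hb₂.1
  obtain ⟨a, ha⟩ := R.exists_mem_J (w := a₁) (r := R.confluenceLevel L x z - Λ) (by omega)
  obtain ⟨c, hc, hac⟩ := R.exists_mem_J_dh_le hexp ha (by omega : R.level a₁ = R.level c₁)
  obtain ⟨c', hc'⟩ := R.exists_mem_J (w := c₂) (r := R.confluenceLevel L z y - Λ) (by omega)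
  obtain ⟨b, hb, hcb⟩ := R.exists_mem_J_dh_le hexp hc' (by omega : R.level c₂ = R.level b₂)
  have hcc' : R.dh c c' ≤ 1 := R.dh_le_one_of_mem_J hexp
    (R.mem_J_trans hc hc₁ (n := R.level z - Λ) (by omega))
    (R.mem_J_trans hc' hc₂ (by omega)) (by simp [dh_self])
  have hab := R.dh_le_add (R.dh_le_add (hac.trans hac₁) hcc') (hcb.trans hcb₂)
  have hlt' := R.two_mul_sub_confluenceLevel_lt_dh hexp hL (Λ := Λ) (by omega) (by omega)
    (R.mem_J_trans ha ha₁ (by omega)) (R.mem_J_trans hb hb₂ (by omega)) (by omega)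
  have : 2 * (Λ - R.confluenceLevel L x y) < L + 1 + L := by exact_mod_cast hlt'.trans_le hab
  omega

theorem hyperbolic_of_horizGeodesicBound (hexp : R.Expansive) (hL : R.HorizGeodesicBound L) :
    R.Hyperbolic := by
  have gp_le (x y : X) : R.gp x y ≤ R.confluenceLevel L x y := by
    have : (R.level x + R.level y : ℝ) ≤ R.G.dist x y + 2 * R.confluenceLevel L x y := by
      exact_mod_cast R.level_add_level_le_dist_add_two_mul_confluenceLevel hexp hL x y
    rw [gp]
    linarith
  have le_gp (x y : X) : (R.confluenceLevel L x y : ℝ) - L / 2 ≤ R.gp x y := by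
    have : (R.G.dist x y + 2 * R.confluenceLevel L x y : ℝ) ≤ R.level x + R.level y + L := by
      exact_mod_cast R.dist_add_two_mul_confluenceLevel_le L x y
    rw [gp]
    linarith
  refine ⟨3 * L / 2, by positivity, fun x y z => ?_⟩
  have hmin : (min (R.confluenceLevel L x z) (R.confluenceLevel L z y) : ℝ) ≤
      R.confluenceLevel L x y + L := by
    exact_mod_cast R.min_confluenceLevel_le hexp hL x y z
  have := min_le_min (gp_le x z) (gp_le z y)
  linarith [le_gp x y]

end HorizGeodesicBound

theorem exists_horizGeodesicBound_of_hyperbolic (h : R.Hyperbolic) :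
    ∃ L, R.HorizGeodesicBound L := by
  obtain ⟨δ, -, hδ⟩ := h
  refine ⟨⌈4 * δ + 1⌉₊, fun x y hxy => ?_⟩
  set ℓ := R.G.dist x y
  set p := (ℓ + 1) / 2
  obtain ⟨z, hxz, hzy⟩ := exists_edist_le_edist_le (G := R.Gh) (x := x) (y := y) (m := p)
    (n := ℓ - p) (by rw [← dh, hxy]; exact_mod_cast (by omega : ℓ ≤ p + (ℓ - p)))
  have hz := R.level_eq_of_dh_le hxz
  have hy := R.level_eq_of_dh_le hxy.le
  have hdxz : (R.G.dist x z : ℝ) ≤ p := by exact_mod_cast R.dist_le_of_dh_le hxz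
  have hdzy : (R.G.dist z y : ℝ) ≤ p := by
    exact_mod_cast (R.dist_le_of_dh_le hzy).trans (by omega)
  have hp : (2 * p : ℝ) ≤ ℓ + 1 := by exact_mod_cast (by omega : 2 * p ≤ ℓ + 1)
  have hxz' : (R.level x : ℝ) - p / 2 ≤ R.gp x z := by rw [gp, ← hz]; linarith
  have hzy' : (R.level x : ℝ) - p / 2 ≤ R.gp z y := by rw [gp, ← hz, ← hy]; linarith
  have hxy' : R.gp x y = R.level x - ℓ / 2 := by rw [gp, ← hy]; ring
  have hℓ : (ℓ : ℝ) ≤ ⌈4 * δ + 1⌉₊ := by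
    linarith [hδ x y z, le_min hxz' hzy', Nat.le_ceil (4 * δ + 1)]
  rw [hxy]
  exact_mod_cast hℓ

lemma dh_le_of_departing {m k : ℕ} (hdep : R.Departing m k) (t : ℕ) {u v a b : X}
    (huv : R.dh u v ≤ (2 ^ t * k : ℕ)) (ha : u ∈ R.J (t * m) a) (hb : v ∈ R.J (t * m) b) :
    R.dh a b ≤ k := by
  induction t generalizing u v a b with
  | zero =>
    rw [zero_mul, R.mem_J_zero] at ha hb
    subst ha hb
    simpa using huv
  | succ t ih =>
    rw [add_one_mul, add_comm] at ha hb
    obtain ⟨u', hau', hu'u⟩ := R.exists_mem_J_of_mem_J_add ha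
    obtain ⟨v', hbv', hv'v⟩ := R.exists_mem_J_of_mem_J_add hb
    obtain ⟨w, huw, hwv⟩ := exists_edist_le_edist_le (G := R.Gh) (m := 2 ^ t * k)
      (n := 2 ^ t * k) (huv.trans_eq (by push_cast; ring))
    have hlw := R.level_eq_of_dh_le huw
    have hluv := R.level_eq_of_dh_le huv
    obtain ⟨w', hw'⟩ := R.exists_mem_J (w := w) (r := t * m) (by rw [← hlw, ha.1]; omega)
    have hu'w' := ih huw hu'u hw'
    have hw'v' := ih hwv hw' hv'v
    by_contra! hab
    have hlab : R.level a = R.level b := by rw [ha.1, hb.1] at hluv; omega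
    exact (hdep a b hlab hab u' hau' v' hbv').not_ge
      ((R.dh_le_add hu'w' hw'v').trans_eq (by rw [two_mul]))

theorem exists_horizGeodesicBound_of_departing {m k : ℕ} (hk : 0 < k)
    (hdep : R.Departing m k) : ∃ L, R.HorizGeodesicBound L := by
  obtain ⟨t, ht⟩ := Nat.exists_mul_add_lt_two_pow (2 * m) k
  have htk : 2 ^ t ≤ 2 ^ t * k := Nat.le_mul_of_pos_right _ hk
  rw [mul_assoc, mul_comm m t] at ht
  refine ⟨2 * (t * m) + k, fun x y hxy => ?_⟩
  set ℓ := R.G.dist x y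
  have hy := R.level_eq_of_dh_le hxy.le
  rw [hxy]
  refine Nat.cast_le.mpr (not_lt.mp fun hlong => ?_)
  have hxy' : ℓ ≤ R.level x + R.level y := by
    rw [level, SimpleGraph.dist_comm]
    exact R.conn.dist_triangle
  set j := 2 * (t * m) + k + 1
  obtain ⟨w, hxw, hwy⟩ := exists_edist_le_edist_le (G := R.Gh) (x := x) (y := y) (m := j)
    (n := ℓ - j) (by rw [← dh, hxy]; exact_mod_cast (by omega : ℓ ≤ j + (ℓ - j)))
  have hw := R.level_eq_of_dh_le hxw
  obtain ⟨a, ha⟩ := R.exists_mem_J (w := x) (r := t * m) (by omega)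
  obtain ⟨b, hb⟩ := R.exists_mem_J (w := w) (r := t * m) (by omega)
  have hab := R.dh_le_of_departing hdep t (hxw.trans (Nat.cast_le.mpr (by omega))) ha hb
  have h₁ := R.dist_le_of_mem_J ha hb hab
  have h₂ := R.dist_le_of_dh_le hwy
  have h₃ : ℓ ≤ R.G.dist x w + R.G.dist w y := R.conn.dist_triangle
  omega

end RootedGraph

/-- Theorem 2.11: for an expansive rooted graph, hyperbolicity, a uniform
bound on horizontal geodesics, and the `(m,k)`-departing property are all equivalent;
moreover a bound `L` on horizontal geodesics yields the `(L+1,L+2)`-departing property. -/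
theorem expansive_hyperbolic_tfae {X : Type*} (R : RootedGraph X) (hexp : R.Expansive) :
    (R.Hyperbolic ↔
      ∃ L : ℕ, ∀ x y : X, R.dh x y = (R.G.dist x y : ℕ∞) → R.dh x y ≤ (L : ℕ∞)) ∧
    (R.Hyperbolic ↔ ∃ m k : ℕ, 0 < m ∧ 0 < k ∧ R.Departing m k) ∧
    (∀ L : ℕ, (∀ x y : X, R.dh x y = (R.G.dist x y : ℕ∞) → R.dh x y ≤ (L : ℕ∞)) →
      R.Departing (L + 1) (L + 2)) := by
  have hyperbolic_iff : R.Hyperbolic ↔ ∃ L, R.HorizGeodesicBound L :=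
    ⟨R.exists_horizGeodesicBound_of_hyperbolic,
      fun ⟨_, hL⟩ => R.hyperbolic_of_horizGeodesicBound hexp hL⟩
  refine ⟨hyperbolic_iff, ⟨fun h => ?_, fun ⟨_, _, _, hk, hdep⟩ => ?_⟩,
    fun _ hL => R.departing_of_horizGeodesicBound hexp hL⟩
  · obtain ⟨L, hL⟩ := hyperbolic_iff.mp h
    exact ⟨L + 1, L + 2, L.succ_pos, by omega, R.departing_of_horizGeodesicBound hexp hL⟩
  · exact hyperbolic_iff.mpr (R.exists_horizGeodesicBound_of_departing hk hdep)
end
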